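/- arXiv:2211.16019 — 4 statements merged into one kernel-verified Lean document; each statement's English description precedes it below -/
import Mathlib

section
/- Let (Ω, mΩ, μ) be a probability space with Ω a standard Borel space, let S : Ω → 𝒮, Z : Ω → 𝒵, Y : Ω → 𝒴 be measurable maps into measurable spaces, let f : 𝒮 × 𝒵 → ℐ be a measurable embedding, and set I := (ω ↦ f (S ω, Z ω)). Let ψ : ℐ → 𝒮 be measurable with ψ(f(s, z)) = s for all s, z. If σ(Y) and σ(Z) are conditionally independent given σ(S), then σ(Y) and σ(I) are conditionally independent given σ(ψ ∘ I). -/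
/-!
Since `ψ ∘ I = S`, conditioning on `ψ ∘ I` is conditioning on `S`; since `f` is a measurable
embedding, `σ(I) = σ(S, Z) = σ(S) ⊔ σ(Z)`. So it suffices that `Y ⊥ Z | S` upgrades to
`Y ⊥ (S, Z) | S`: on an event `s ∈ σ(S)` the conditional expectation given `σ(S)` factors as
`μ⟦s ∩ u | σ(S)⟧ = 1_s · μ⟦u | σ(S)⟧`, so the product rule for the events `s ∩ t`, `t ∈ σ(Z)`,
reduces to the one for `t`, and these events form a π-system generating `σ(S) ⊔ σ(Z)`.
-/

open MeasureTheory ProbabilityTheory Set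

theorem IsPiSystem.image2_inter {α : Type*} {C D : Set (Set α)}
    (hC : IsPiSystem C) (hD : IsPiSystem D) : IsPiSystem (image2 (· ∩ ·) C D) := by
  rintro _ ⟨s₁, hs₁, t₁, ht₁, rfl⟩ _ ⟨s₂, hs₂, t₂, ht₂, rfl⟩ hne
  rw [inter_inter_inter_comm] at hne ⊢
  exact mem_image2_of_mem (hC _ hs₁ _ hs₂ (hne.mono inter_subset_left))
    (hD _ ht₁ _ ht₂ (hne.mono inter_subset_right))

namespace MeasurableSpace

theorem generateFrom_image2_inter {α : Type*} (m₁ m₂ : MeasurableSpace α) :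
    generateFrom (image2 (· ∩ ·) {s | MeasurableSet[m₁] s} {t | MeasurableSet[m₂] t})
      = m₁ ⊔ m₂ := by
  refine le_antisymm (generateFrom_le ?_) (sup_le (fun s hs => ?_) (fun t ht => ?_))
  · rintro _ ⟨s, hs, t, ht, rfl⟩
    exact (le_sup_left (b := m₂) s hs).inter (le_sup_right (a := m₁) t ht)
  · exact measurableSet_generateFrom ⟨s, hs, univ, MeasurableSet.univ, inter_univ s⟩
  · exact measurableSet_generateFrom ⟨univ, MeasurableSet.univ, t, ht, univ_inter t⟩

end MeasurableSpace

open MeasurableSpace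

theorem MeasureTheory.condExp_inter_of_measurableSet_left {Ω : Type*}
    {m mΩ : MeasurableSpace Ω} {μ : Measure Ω} [IsFiniteMeasure μ] {s u : Set Ω}
    (hs : MeasurableSet[m] s) (hu : MeasurableSet u) :
    μ⟦s ∩ u | m⟧ =ᵐ[μ] s.indicator (μ⟦u | m⟧) := by
  rw [← indicator_indicator]
  exact condExp_indicator ((integrable_const 1).indicator hu) hs

theorem ProbabilityTheory.CondIndep.cond_sup_right {Ω : Type*}
    {m' m₁ m₂ mΩ : MeasurableSpace Ω} [StandardBorelSpace Ω] {hm' : m' ≤ mΩ}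
    {μ : Measure Ω} [IsFiniteMeasure μ]
    (hm₁ : m₁ ≤ mΩ) (hm₂ : m₂ ≤ mΩ) (h : CondIndep m' m₁ m₂ hm' μ) :
    CondIndep m' m₁ (m' ⊔ m₂) hm' μ := by
  refine CondIndepSets.condIndep hm₁ (sup_le hm' hm₂) (@isPiSystem_measurableSet Ω m₁)
    ((@isPiSystem_measurableSet Ω m').image2_inter (@isPiSystem_measurableSet Ω m₂))
    (@generateFrom_measurableSet Ω m₁).symm (generateFrom_image2_inter m' m₂).symm ?_
  have hp₂ : ∀ u ∈ image2 (· ∩ ·) {s | MeasurableSet[m'] s} {t | MeasurableSet[m₂] t},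
      MeasurableSet u := by
    rintro _ ⟨s, hs, t, ht, rfl⟩
    exact (hm' s hs).inter (hm₂ t ht)
  rw [condIndepSets_iff _ _ {s | MeasurableSet[m₁] s} _ (fun s hs => hm₁ s hs) hp₂ μ]
  rintro A _ hA ⟨s, hs, t, ht, rfl⟩
  have hAt := (condIndep_iff _ _ _ _ hm₁ hm₂ μ).mp h A t hA ht
  calc μ⟦A ∩ (s ∩ t) | m'⟧ = μ⟦s ∩ (A ∩ t) | m'⟧ := by rw [inter_left_comm]
    _ =ᵐ[μ] s.indicator (μ⟦A ∩ t | m'⟧) :=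
      condExp_inter_of_measurableSet_left hs ((hm₁ A hA).inter (hm₂ t ht))
    _ =ᵐ[μ] s.indicator (μ⟦A | m'⟧ * μ⟦t | m'⟧) := hAt.indicator
    _ =ᵐ[μ] μ⟦A | m'⟧ * μ⟦s ∩ t | m'⟧ := by
      filter_upwards [condExp_inter_of_measurableSet_left hs (hm₂ t ht)] with ω hω
      rw [Pi.mul_apply, hω, ← indicator_mul_right]
      rfl

/-- If `ψ` recovers exactly the causal features `S` from the image `I = f (S, Z)` and
`Y ⊥ Z | S`, then `Y ⊥ I | ψ ∘ I`. -/
theorem condIndep_image_of_condIndep_noncausal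
    {Ω 𝒮 𝒵 𝒴 ℐ : Type*} {mΩ : MeasurableSpace Ω} [StandardBorelSpace Ω]
    {m𝒮 : MeasurableSpace 𝒮} {m𝒵 : MeasurableSpace 𝒵} {m𝒴 : MeasurableSpace 𝒴}
    {mℐ : MeasurableSpace ℐ}
    (μ : Measure Ω) [IsProbabilityMeasure μ]
    {S : Ω → 𝒮} {Z : Ω → 𝒵} {Y : Ω → 𝒴}
    (hS : Measurable S) (hZ : Measurable Z) (hY : Measurable Y)
    {f : 𝒮 × 𝒵 → ℐ} (hf : MeasurableEmbedding f)
    {ψ : ℐ → 𝒮} (hψ : Measurable ψ) (hψf : ∀ s z, ψ (f (s, z)) = s)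
    (h : CondIndep (MeasurableSpace.comap S m𝒮)
      (MeasurableSpace.comap Y m𝒴) (MeasurableSpace.comap Z m𝒵) hS.comap_le μ) :
    CondIndep
      (MeasurableSpace.comap (fun ω => ψ (f (S ω, Z ω))) m𝒮)
      (MeasurableSpace.comap Y m𝒴)
      (MeasurableSpace.comap (fun ω => f (S ω, Z ω)) mℐ)
      ((hψ.comp (hf.measurable.comp (hS.prodMk hZ))).comap_le) μ := by
  have hψI : (fun ω => ψ (f (S ω, Z ω))) = S := funext fun ω => hψf _ _
  have hI : MeasurableSpace.comap (fun ω => f (S ω, Z ω)) mℐ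
      = MeasurableSpace.comap S m𝒮 ⊔ MeasurableSpace.comap Z m𝒵 := by
    rw [show (fun ω => f (S ω, Z ω)) = f ∘ fun ω => (S ω, Z ω) from rfl, ← comap_comp,
      hf.comap_eq]
    exact comap_prodMk S Z
  rw [hI]
  convert h.cond_sup_right hY.comap_le hZ.comap_le using 1
  rw [hψI]
end

section
/- Let (Ω, mΩ, μ) be a probability space with Ω a standard Borel space, let S : Ω → 𝒮, Z : Ω → 𝒵, Y : Ω → 𝒴 be measurable maps into measurable spaces, let f : 𝒮 × 𝒵 → ℐ be a measurable embedding, set I := (ω ↦ f (S ω, Z ω)), and let ψ : ℐ → 𝒲 be measurable. Suppose σ(Y) and σ(Z) are NOT conditionally independent given σ(S), and suppose σ(Y) and σ(I) are conditionally independent given σ(ψ ∘ I). Then there is no measurable h : 𝒮 → 𝒲 with ψ(f(s, z)) = h(s) for all s, z; that is, the representation ψ necessarily depends on the non-causal features Z. -/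
/-!
If `ψ (f (s, z)) = h s`, then `σ(ψ ∘ I) ≤ σ(S) ≤ σ(I) = σ(S) ⊔ σ(Z)`. For `m' ≤ m₂`,
conditional independence of `m₁` and `m₂` given `m'` says that `μ⟦A | m₂⟧ = μ⟦A | m'⟧`
for every `A ∈ m₁`; this property survives replacing `m'` by any `m''` between `m'` and
`m₂` (weak union). So `Y ⊥ I | ψ ∘ I` gives `Y ⊥ I | S`, hence `Y ⊥ Z | S`, contradicting
the selection bias.
-/

open MeasureTheory ProbabilityTheory

lemma Set.mul_indicator_one_eq_indicator {ι M₀ : Type*} [MulZeroOneClass M₀] (g : ι → M₀)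
    (s : Set ι) : g * s.indicator (fun _ => 1) = s.indicator g := by
  ext i
  by_cases hi : i ∈ s <;> simp [hi]

lemma Set.inter_indicator_one' {ι M₀ : Type*} [MulZeroOneClass M₀] (s t : Set ι) :
    (s ∩ t).indicator (fun _ => (1 : M₀)) =
      s.indicator (fun _ => 1) * t.indicator (fun _ => 1) :=
  Set.inter_indicator_one

namespace ProbabilityTheory

section CondExp

variable {Ω : Type*} {m m₀ : MeasurableSpace Ω} {μ : Measure Ω}

lemma integral_mul_condExp (hm : m ≤ m₀) [SigmaFinite (μ.trim hm)] {f g : Ω → ℝ}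
    (hg : AEStronglyMeasurable[m] g μ) (hgf : Integrable (g * f) μ) (hf : Integrable f μ) :
    ∫ ω, (g * μ[f | m]) ω ∂μ = ∫ ω, (g * f) ω ∂μ :=
  calc ∫ ω, (g * μ[f | m]) ω ∂μ = ∫ ω, μ[g * f | m] ω ∂μ :=
        integral_congr_ae (condExp_mul_of_aestronglyMeasurable_left hg hgf hf).symm
    _ = ∫ ω, (g * f) ω ∂μ := integral_condExp hm

lemma setIntegral_eq_integral_mul_indicator_one {s : Set Ω} (hs : MeasurableSet s)
    (g : Ω → ℝ) :
    ∫ ω in s, g ω ∂μ = ∫ ω, (g * s.indicator (fun _ => (1 : ℝ))) ω ∂μ := by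
  rw [← integral_indicator hs, Set.mul_indicator_one_eq_indicator]

end CondExp

section CondIndep

-- `mΩ` comes last so that it, not one of the sub-σ-algebras, is the ambient instance.
variable {Ω : Type*} {m' m'' m₁ m₂ : MeasurableSpace Ω} {mΩ : MeasurableSpace Ω}
  [StandardBorelSpace Ω] {μ : Measure Ω} [IsFiniteMeasure μ]

lemma condIndep_iff_condExp_indicator_eq (hm' : m' ≤ m₂) (hm₁ : m₁ ≤ mΩ)
    (hm₂ : m₂ ≤ mΩ) :
    CondIndep m' m₁ m₂ (hm'.trans hm₂) μ ↔
      ∀ A, MeasurableSet[m₁] A → μ⟦A | m₂⟧ =ᵐ[μ] μ⟦A | m'⟧ := by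
  have hind : ∀ {t}, MeasurableSet t → Integrable (t.indicator fun _ => (1 : ℝ)) μ :=
    fun ht => (integrable_const 1).indicator ht
  rw [condIndep_iff _ _ _ _ hm₁ hm₂]
  constructor
  · intro h A hA
    refine (ae_eq_condExp_of_forall_setIntegral_eq hm₂ (hind (hm₁ _ hA))
      (fun s _ _ => integrable_condExp.integrableOn) (fun s hs _ => ?_)
      (stronglyMeasurable_condExp.aestronglyMeasurable.mono hm')).symm
    have hsΩ := hm₂ _ hs
    have hAs : Integrable ((μ⟦A | m'⟧) * s.indicator fun _ => 1) μ := by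
      rw [Set.mul_indicator_one_eq_indicator]; exact integrable_condExp.indicator hsΩ
    calc ∫ ω in s, (μ⟦A | m'⟧) ω ∂μ
        = ∫ ω, ((μ⟦A | m'⟧) * (μ⟦s | m'⟧)) ω ∂μ := by
          rw [setIntegral_eq_integral_mul_indicator_one hsΩ,
            integral_mul_condExp (hm'.trans hm₂) stronglyMeasurable_condExp.aestronglyMeasurable
              hAs (hind hsΩ)]
      _ = ∫ ω, (μ⟦A ∩ s | m'⟧) ω ∂μ := integral_congr_ae (h A s hA hs).symm
      _ = ∫ ω, (A ∩ s).indicator (fun _ => (1 : ℝ)) ω ∂μ :=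
          integral_condExp (hm'.trans hm₂)
      _ = ∫ ω in s, A.indicator (fun _ => (1 : ℝ)) ω ∂μ := by
          rw [setIntegral_eq_integral_mul_indicator_one hsΩ, Set.inter_indicator_one']
  · intro h A B hA hB
    have hBΩ := hm₂ _ hB
    have hAB : Integrable ((A.indicator fun _ => (1 : ℝ)) * B.indicator fun _ => 1) μ := by
      rw [← Set.inter_indicator_one']; exact hind ((hm₁ _ hA).inter hBΩ)
    have hAB' : Integrable ((μ⟦A | m'⟧) * B.indicator fun _ => 1) μ := by
      rw [Set.mul_indicator_one_eq_indicator]; exact integrable_condExp.indicator hBΩ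
    calc μ⟦A ∩ B | m'⟧
        =ᵐ[μ] μ[μ⟦A ∩ B | m₂⟧ | m'] := (condExp_condExp_of_le hm' hm₂).symm
      _ =ᵐ[μ] μ[(μ⟦A | m₂⟧) * B.indicator fun _ => 1 | m'] := by
          rw [Set.inter_indicator_one']
          exact condExp_congr_ae (condExp_mul_of_stronglyMeasurable_right
            (stronglyMeasurable_const.indicator hB) hAB (hind (hm₁ _ hA)))
      _ =ᵐ[μ] μ[(μ⟦A | m'⟧) * B.indicator fun _ => 1 | m'] :=
          condExp_congr_ae ((h A hA).mul (ae_eq_refl _))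
      _ =ᵐ[μ] (μ⟦A | m'⟧) * (μ⟦B | m'⟧) :=
          condExp_mul_of_aestronglyMeasurable_left stronglyMeasurable_condExp.aestronglyMeasurable
            hAB' (hind hBΩ)

theorem CondIndep.weak_union (hm₁ : m₁ ≤ mΩ) (hm₂ : m₂ ≤ mΩ) (h' : m' ≤ m'')
    (h'' : m'' ≤ m₂)
    (h : CondIndep m' m₁ m₂ (h'.trans (h''.trans hm₂)) μ) :
    CondIndep m'' m₁ m₂ (h''.trans hm₂) μ := by
  rw [condIndep_iff_condExp_indicator_eq (h'.trans h'') hm₁ hm₂] at h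
  rw [condIndep_iff_condExp_indicator_eq h'' hm₁ hm₂]
  intro A hA
  calc μ⟦A | m₂⟧
      =ᵐ[μ] μ⟦A | m'⟧ := h A hA
    _ =ᵐ[μ] μ[μ⟦A | m'⟧ | m''] := (condExp_of_aestronglyMeasurable' (h''.trans hm₂)
        (stronglyMeasurable_condExp.aestronglyMeasurable.mono h') integrable_condExp).symm
    _ =ᵐ[μ] μ[μ⟦A | m₂⟧ | m''] := condExp_congr_ae (h A hA).symm
    _ =ᵐ[μ] μ⟦A | m''⟧ := condExp_condExp_of_le h'' hm₂

end CondIndep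

end ProbabilityTheory

lemma MeasurableEmbedding.comap_comp_prodMk {Ω α β γ : Type*} {mα : MeasurableSpace α}
    {mβ : MeasurableSpace β} {mγ : MeasurableSpace γ} {f : α × β → γ}
    (hf : MeasurableEmbedding f)
    (X : Ω → α) (Y : Ω → β) :
    MeasurableSpace.comap (fun ω => f (X ω, Y ω)) mγ =
      MeasurableSpace.comap X mα ⊔ MeasurableSpace.comap Y mβ := by
  rw [show (fun ω => f (X ω, Y ω)) = f ∘ fun ω => (X ω, Y ω) from rfl,
    ← MeasurableSpace.comap_comp, hf.comap_eq]
  exact MeasurableSpace.comap_prodMk X Y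

/-- First bullet of Theorem 1: if `Y` and `Z` are not conditionally independent given `S`,
but `Y ⊥ I | ψ ∘ I` for the image `I = f (S, Z)`, then the representation `ψ` cannot factor
through the causal features `S` alone, i.e. it must depend on `Z`. -/
theorem representation_depends_on_noncausal
    {Ω 𝒮 𝒵 𝒴 ℐ 𝒲 : Type*} {mΩ : MeasurableSpace Ω} [StandardBorelSpace Ω]
    {m𝒮 : MeasurableSpace 𝒮} {m𝒵 : MeasurableSpace 𝒵} {m𝒴 : MeasurableSpace 𝒴}
    {mℐ : MeasurableSpace ℐ} {m𝒲 : MeasurableSpace 𝒲}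
    (μ : Measure Ω) [IsProbabilityMeasure μ]
    {S : Ω → 𝒮} {Z : Ω → 𝒵} {Y : Ω → 𝒴}
    (hS : Measurable S) (hZ : Measurable Z) (hY : Measurable Y)
    {f : 𝒮 × 𝒵 → ℐ} (hf : MeasurableEmbedding f)
    {ψ : ℐ → 𝒲} (hψ : Measurable ψ)
    (hdep : ¬ CondIndep (MeasurableSpace.comap S m𝒮)
      (MeasurableSpace.comap Y m𝒴) (MeasurableSpace.comap Z m𝒵) hS.comap_le μ)
    (hci : CondIndep
      (MeasurableSpace.comap (fun ω => ψ (f (S ω, Z ω))) m𝒲)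
      (MeasurableSpace.comap Y m𝒴)
      (MeasurableSpace.comap (fun ω => f (S ω, Z ω)) mℐ)
      ((hψ.comp (hf.measurable.comp (hS.prodMk hZ))).comap_le) μ) :
    ¬ ∃ h : 𝒮 → 𝒲, Measurable h ∧ ∀ s z, ψ (f (s, z)) = h s := by
  rintro ⟨h, hh, hfac⟩
  have hI := hf.comap_comp_prodMk S Z
  have hWS :
      MeasurableSpace.comap (fun ω => ψ (f (S ω, Z ω))) m𝒲 ≤ MeasurableSpace.comap S m𝒮 := by
    rw [show (fun ω => ψ (f (S ω, Z ω))) = h ∘ S from funext fun ω => hfac (S ω) (Z ω),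
      ← MeasurableSpace.comap_comp]
    exact MeasurableSpace.comap_mono hh.comap_le
  have hSI :
      MeasurableSpace.comap S m𝒮 ≤ MeasurableSpace.comap (fun ω => f (S ω, Z ω)) mℐ :=
    hI ▸ le_sup_left
  have hZI :
      MeasurableSpace.comap Z m𝒵 ≤ MeasurableSpace.comap (fun ω => f (S ω, Z ω)) mℐ :=
    hI ▸ le_sup_right
  exact hdep <| condIndep_of_condIndep_of_le_right
    (hci.weak_union hY.comap_le (hf.measurable.comp (hS.prodMk hZ)).comap_le hWS hSI) hZI
end

section
/- Let (Ω, mΩ, μ) be a probability space with Ω a standard Borel space, let S : Ω → 𝒮, Z : Ω → 𝒵 be measurable maps into measurable spaces, let g : 𝒮 × 𝒵 → 𝒴 be measurable and set Y := (ω ↦ g (S ω, Z ω)), let f : 𝒮 × 𝒵 → ℐ be a measurable embedding and set I := (ω ↦ f (S ω, Z ω)), and let ψ : ℐ → 𝒲 be measurable such that there is a measurable h : 𝒮 → 𝒲 with ψ(f(s, z)) = h(s) for all s, z. If σ(Y) and σ(I) are conditionally independent given σ(ψ ∘ I), then for every measurable set A ⊆ 𝒴 there exists a σ(S)-measurable set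 B ⊆ Ω with μ(Y⁻¹(A) Δ B) = 0; i.e., Y is almost surely determined by S. -/
open MeasureTheory ProbabilityTheory symmDiff

/-! Conditional independence of `σ(Y)` and `σ(I)` given `m'` makes every event `t` lying in both
conditionally independent of itself, so its conditional probability `p` satisfies `p = p²` and is
a.e. the indicator of the `m'`-measurable set `B = {p = 1}`; integrating over `B` and `Bᶜ` shows
`μ (t ∆ B) = 0`. Here `σ(Y) ≤ σ(S, Z) = σ(I)` because `f` is a measurable embedding, and
`m' = σ(ψ ∘ I) = σ(h ∘ S) ≤ σ(S)`. -/

section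

variable {Ω : Type*} {m mΩ : MeasurableSpace Ω} {μ : Measure Ω}

lemma ae_eq_zero_or_one_of_ae_eq_mul_self {f : Ω → ℝ} (hf : f =ᵐ[μ] f * f) :
    ∀ᵐ ω ∂μ, f ω = 0 ∨ f ω = 1 := by
  filter_upwards [hf] with ω hω
  have : f ω * (f ω - 1) = 0 := by rw [Pi.mul_apply] at hω; linear_combination -hω
  simpa [sub_eq_zero] using this

lemma measure_symmDiff_eq_zero_of_measureReal_inter [IsFiniteMeasure μ] {s t : Set Ω}
    (hs : MeasurableSet s) (ht : MeasurableSet t)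
    (h_inter : μ.real (s ∩ t) = μ.real t) (h_diff : μ.real (s \ t) = 0) :
    μ (s ∆ t) = 0 := by
  have h_diff' : μ.real (t \ s) = 0 := by
    have := measureReal_inter_add_sdiff (μ := μ) (s := t) hs
    rw [Set.inter_comm, h_inter] at this
    linarith
  rw [← measureReal_eq_zero_iff, measureReal_symmDiff_eq hs ht, h_diff, h_diff', add_zero]

lemma exists_measurableSet_symmDiff_eq_zero_of_condExp_ae_eq_mul_self [IsFiniteMeasure μ]
    (hm : m ≤ mΩ) {t : Set Ω} (ht : MeasurableSet t)
    (h : μ⟦t | m⟧ =ᵐ[μ] μ⟦t | m⟧ * μ⟦t | m⟧) :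
    ∃ B : Set Ω, MeasurableSet[m] B ∧ μ (t ∆ B) = 0 := by
  set B : Set Ω := μ⟦t | m⟧ ⁻¹' {1}
  have hB : MeasurableSet[m] B := stronglyMeasurable_condExp.measurable (measurableSet_singleton 1)
  have h_ind : μ⟦t | m⟧ =ᵐ[μ] B.indicator 1 := by
    filter_upwards [ae_eq_zero_or_one_of_ae_eq_mul_self h] with ω hω
    rcases hω with h0 | h1
    · simp [B, h0]
    · simp [B, h1]
  have h_inter : ∀ s, MeasurableSet[m] s → μ.real (t ∩ s) = μ.real (B ∩ s) := by
    intro s hs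
    calc μ.real (t ∩ s) = ∫ ω in s, t.indicator 1 ω ∂μ := by
          rw [integral_indicator_one ht, measureReal_restrict_apply ht]
      _ = ∫ ω in s, (μ⟦t | m⟧) ω ∂μ :=
          (setIntegral_condExp hm ((integrable_const 1).indicator ht) hs).symm
      _ = ∫ ω in s, B.indicator 1 ω ∂μ :=
          setIntegral_congr_ae (hm s hs) (h_ind.mono fun _ h _ => h)
      _ = μ.real (B ∩ s) := by
          rw [integral_indicator_one (hm B hB), measureReal_restrict_apply (hm B hB)]
  refine ⟨B, hB, measure_symmDiff_eq_zero_of_measureReal_inter ht (hm B hB) ?_ ?_⟩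
  · rw [h_inter B hB, Set.inter_self]
  · rw [Set.sdiff_eq, h_inter Bᶜ hB.compl, Set.inter_compl_self, measureReal_empty]

end

lemma ProbabilityTheory.CondIndep.exists_measurableSet_symmDiff_eq_zero
    {Ω : Type*} {m' m₁ m₂ mΩ : MeasurableSpace Ω} [StandardBorelSpace Ω]
    {hm' : m' ≤ mΩ} {μ : Measure Ω} [IsFiniteMeasure μ]
    (hci : CondIndep m' m₁ m₂ hm' μ) (hm₁ : m₁ ≤ mΩ) (hm₂ : m₂ ≤ mΩ) {t : Set Ω}
    (ht₁ : MeasurableSet[m₁] t) (ht₂ : MeasurableSet[m₂] t) :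
    ∃ B : Set Ω, MeasurableSet[m'] B ∧ μ (t ∆ B) = 0 := by
  have h := (condIndep_iff m' m₁ m₂ hm' hm₁ hm₂ μ).mp hci t t ht₁ ht₂
  rw [Set.inter_self] at h
  exact exists_measurableSet_symmDiff_eq_zero_of_condExp_ae_eq_mul_self hm' (hm₁ t ht₁) h

lemma MeasurableEmbedding.comap_comp {Ω α β : Type*} {mα : MeasurableSpace α}
    {mβ : MeasurableSpace β} {f : α → β} (hf : MeasurableEmbedding f) (X : Ω → α) :
    MeasurableSpace.comap (f ∘ X) mβ = MeasurableSpace.comap X mα := by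
  rw [← MeasurableSpace.comap_comp, hf.comap_eq]

/-- Key step of Theorem 2 (CutMix): if the label `Y = g (S, Z)` is rendered conditionally
independent of the image `I = f (S, Z)` by a representation `ψ` factoring through `S` alone,
then `Y` is almost surely determined by `S`. -/
theorem label_ae_determined_by_causal
    {Ω 𝒮 𝒵 𝒴 ℐ 𝒲 : Type*} {mΩ : MeasurableSpace Ω} [StandardBorelSpace Ω]
    {m𝒮 : MeasurableSpace 𝒮} {m𝒵 : MeasurableSpace 𝒵} {m𝒴 : MeasurableSpace 𝒴}
    {mℐ : MeasurableSpace ℐ} {m𝒲 : MeasurableSpace 𝒲}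
    (μ : Measure Ω) [IsProbabilityMeasure μ]
    {S : Ω → 𝒮} {Z : Ω → 𝒵}
    (hS : Measurable S) (hZ : Measurable Z)
    {g : 𝒮 × 𝒵 → 𝒴} (hg : Measurable g)
    {f : 𝒮 × 𝒵 → ℐ} (hf : MeasurableEmbedding f)
    {ψ : ℐ → 𝒲} (hψ : Measurable ψ)
    {h : 𝒮 → 𝒲} (hh : Measurable h) (hψf : ∀ s z, ψ (f (s, z)) = h s)
    (hci : CondIndep
      (MeasurableSpace.comap (fun ω => ψ (f (S ω, Z ω))) m𝒲)
      (MeasurableSpace.comap (fun ω => g (S ω, Z ω)) m𝒴)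
      (MeasurableSpace.comap (fun ω => f (S ω, Z ω)) mℐ)
      ((hψ.comp (hf.measurable.comp (hS.prodMk hZ))).comap_le) μ) :
    ∀ A : Set 𝒴, MeasurableSet A → ∃ B : Set Ω,
      MeasurableSet[MeasurableSpace.comap S m𝒮] B ∧
      μ (((fun ω => g (S ω, Z ω)) ⁻¹' A) ∆ B) = 0 := by
  intro A hA
  have hSZ : Measurable fun ω => (S ω, Z ω) := hS.prodMk hZ
  have hY_le_I : MeasurableSpace.comap (fun ω => g (S ω, Z ω)) m𝒴
      ≤ MeasurableSpace.comap (fun ω => f (S ω, Z ω)) mℐ :=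
    (hg.comp (comap_measurable _)).comap_le.trans (hf.comap_comp _).ge
  have hψI_le_S : MeasurableSpace.comap (fun ω => ψ (f (S ω, Z ω))) m𝒲
      ≤ MeasurableSpace.comap S m𝒮 := by
    simp only [hψf]
    exact (hh.comp (comap_measurable S)).comap_le
  obtain ⟨B, hB, hnull⟩ := hci.exists_measurableSet_symmDiff_eq_zero
    (hg.comp hSZ).comap_le (hf.measurable.comp hSZ).comap_le
    ⟨A, hA, rfl⟩ (hY_le_I _ ⟨A, hA, rfl⟩)
  exact ⟨B, hψI_le_S B hB, hnull⟩
end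

section
/- Let (Ω, mΩ, μ) be a probability space with Ω a standard Borel space, let S : Ω → 𝒮, Z : Ω → 𝒵 be measurable maps into measurable spaces, let g : 𝒮 × 𝒵 → 𝒴 be measurable and set Y := (ω ↦ g (S ω, Z ω)), let f : 𝒮 × 𝒵 → ℐ be a measurable embedding and set I := (ω ↦ f (S ω, Z ω)), and let ψ : ℐ → 𝒲 be measurable. Suppose there is some measurable A ⊆ 𝒴 such that Y⁻¹(A) is not μ-a.e. equal to any σ(S)-measurable set (the label genuinely depends on Z). If σ(Y) and σ(I) are conditionally independent given σ(ψ ∘ I), then there is no measurable h : 𝒮 → 𝒲 with ψ(f(s, z)) = h(s) for all s, z; that is, the learned representation ψ depends on the features Z. -/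
open MeasureTheory ProbabilityTheory symmDiff

/-! The event `t = Y ⁻¹' A` is measurable both for `σ(Y)` and, because `f` is injective, for
`σ(I)`; conditional independence therefore makes `t` independent of itself given `σ(ψ ∘ I)`.
Its conditional probability is then `0`/`1`-valued, so `t` is a.e. equal to a
`σ(ψ ∘ I)`-measurable set. If `ψ ∘ f` factored through `S`, that set would be
`σ(S)`-measurable, contradicting the dependence of `Y` on `Z`. -/

lemma ae_eq_indicator_preimage_one_of_zero_or_one {α : Type*} {mα : MeasurableSpace α}
    {ν : Measure α} {c : α → ℝ} (h : ∀ᵐ x ∂ν, c x = 0 ∨ c x = 1) :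
    c =ᵐ[ν] (c ⁻¹' {1}).indicator 1 := by
  filter_upwards [h] with x hx
  rcases hx with hx | hx <;> simp [hx]

section CondExpIndicator

variable {Ω : Type*} {m mΩ : MeasurableSpace Ω} {μ : Measure Ω} [IsFiniteMeasure μ]
  {s t B : Set Ω}

lemma measureReal_inter_eq_of_condExp_ae_eq_indicator (hm : m ≤ mΩ) (ht : MeasurableSet[mΩ] t)
    (hB : MeasurableSet[m] B) (h : μ⟦t | m⟧ =ᵐ[μ] B.indicator 1) (hs : MeasurableSet[m] s) :
    μ.real (t ∩ s) = μ.real (B ∩ s) :=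
  calc μ.real (t ∩ s) = ∫ ω in s, t.indicator 1 ω ∂μ := by
        rw [integral_indicator_one ht, measureReal_restrict_apply ht]
    _ = ∫ ω in s, (μ⟦t | m⟧) ω ∂μ :=
        (setIntegral_condExp hm ((integrable_const 1).indicator ht) hs).symm
    _ = ∫ ω in s, B.indicator 1 ω ∂μ := setIntegral_congr_ae (hm s hs) (h.mono fun _ h _ => h)
    _ = μ.real (B ∩ s) := by
        rw [integral_indicator_one (hm B hB), measureReal_restrict_apply (hm B hB)]

lemma ae_eq_of_condExp_ae_eq_indicator (hm : m ≤ mΩ) (ht : MeasurableSet[mΩ] t)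
    (hB : MeasurableSet[m] B) (h : μ⟦t | m⟧ =ᵐ[μ] B.indicator 1) : t =ᵐ[μ] B := by
  have h_inter : μ.real (t ∩ B) = μ.real B := by
    rw [measureReal_inter_eq_of_condExp_ae_eq_indicator hm ht hB h hB, Set.inter_self]
  have h_total : μ.real t = μ.real B := by
    simpa using measureReal_inter_eq_of_condExp_ae_eq_indicator hm ht hB h MeasurableSet.univ
  have h_null : NullMeasurableSet (t ∩ B) μ := (ht.inter (hm B hB)).nullMeasurableSet
  have h_inter_B : (t ∩ B : Set Ω) =ᵐ[μ] B := ae_eq_of_subset_of_measure_ge Set.inter_subset_right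
    ((measureReal_eq_measureReal_iff).1 h_inter).ge h_null (measure_ne_top μ B)
  have h_inter_t : (t ∩ B : Set Ω) =ᵐ[μ] t := ae_eq_of_subset_of_measure_ge Set.inter_subset_left
    ((measureReal_eq_measureReal_iff).1 (h_inter.trans h_total.symm)).ge h_null
    (measure_ne_top μ t)
  exact h_inter_t.symm.trans h_inter_B

lemma exists_measurableSet_ae_eq_of_condIndepSet_self [StandardBorelSpace Ω] (hm : m ≤ mΩ)
    (ht : MeasurableSet[mΩ] t) (h : CondIndepSet m hm t t μ) :
    ∃ B, MeasurableSet[m] B ∧ t =ᵐ[μ] B := by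
  have hB : MeasurableSet[m] (μ⟦t | m⟧ ⁻¹' {1}) :=
    stronglyMeasurable_condExp.measurable (measurableSet_singleton 1)
  exact ⟨_, hB, ae_eq_of_condExp_ae_eq_indicator hm ht hB
    (ae_eq_indicator_preimage_one_of_zero_or_one
      (condExp_eq_zero_or_one_of_condIndepSet_self hm ht h))⟩

end CondExpIndicator

lemma MeasurableEmbedding.comap_comp_le_comap_comp {α β γ δ : Type*} {mα : MeasurableSpace α}
    {mβ : MeasurableSpace β} {mγ : MeasurableSpace γ} {f : α → γ} {g : α → β} {X : δ → α}
    (hf : MeasurableEmbedding f) (hg : Measurable g) : mβ.comap (g ∘ X) ≤ mγ.comap (f ∘ X) := by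
  rw [← MeasurableSpace.comap_comp, ← MeasurableSpace.comap_comp, hf.comap_eq]
  exact MeasurableSpace.comap_mono hg.comap_le

/-- Theorem 2 (CutMix): if the label `Y = g (S, Z)` genuinely depends on `Z` (some preimage
`Y ⁻¹' A` is not a.e. equal to any `σ(S)`-measurable set), and `Y ⊥ I | ψ ∘ I` for the image
`I = f (S, Z)`, then the representation `ψ` cannot factor through `S` alone: it depends on `Z`. -/
theorem cutmix_representation_depends_on_noncausal
    {Ω 𝒮 𝒵 𝒴 ℐ 𝒲 : Type*} {mΩ : MeasurableSpace Ω} [StandardBorelSpace Ω]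
    {m𝒮 : MeasurableSpace 𝒮} {m𝒵 : MeasurableSpace 𝒵} {m𝒴 : MeasurableSpace 𝒴}
    {mℐ : MeasurableSpace ℐ} {m𝒲 : MeasurableSpace 𝒲}
    (μ : Measure Ω) [IsProbabilityMeasure μ]
    {S : Ω → 𝒮} {Z : Ω → 𝒵}
    (hS : Measurable S) (hZ : Measurable Z)
    {g : 𝒮 × 𝒵 → 𝒴} (hg : Measurable g)
    {f : 𝒮 × 𝒵 → ℐ} (hf : MeasurableEmbedding f)
    {ψ : ℐ → 𝒲} (hψ : Measurable ψ)
    (hdep : ∃ A : Set 𝒴, MeasurableSet A ∧ ¬ ∃ B : Set Ω,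
      MeasurableSet[MeasurableSpace.comap S m𝒮] B ∧
      μ (((fun ω => g (S ω, Z ω)) ⁻¹' A) ∆ B) = 0)
    (hci : CondIndep
      (MeasurableSpace.comap (fun ω => ψ (f (S ω, Z ω))) m𝒲)
      (MeasurableSpace.comap (fun ω => g (S ω, Z ω)) m𝒴)
      (MeasurableSpace.comap (fun ω => f (S ω, Z ω)) mℐ)
      ((hψ.comp (hf.measurable.comp (hS.prodMk hZ))).comap_le) μ) :
    ¬ ∃ h : 𝒮 → 𝒲, Measurable h ∧ ∀ s z, ψ (f (s, z)) = h s := by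
  rintro ⟨h, hh, hψ_eq⟩
  obtain ⟨A, hA, h_not_ae_eq⟩ := hdep
  have hY_le_I : MeasurableSpace.comap (fun ω => g (S ω, Z ω)) m𝒴
      ≤ MeasurableSpace.comap (fun ω => f (S ω, Z ω)) mℐ :=
    hf.comap_comp_le_comap_comp (X := fun ω => (S ω, Z ω)) hg
  have hψ_le_S : MeasurableSpace.comap (fun ω => ψ (f (S ω, Z ω))) m𝒲
      ≤ MeasurableSpace.comap S m𝒮 :=
    MeasurableSpace.comap_le_comap_of_eq_comp h hh (funext fun ω => hψ_eq (S ω) (Z ω))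
  have htY : MeasurableSet[MeasurableSpace.comap (fun ω => g (S ω, Z ω)) m𝒴]
      ((fun ω => g (S ω, Z ω)) ⁻¹' A) := ⟨A, hA, rfl⟩
  obtain ⟨B, hB, ht_ae_eq⟩ := exists_measurableSet_ae_eq_of_condIndepSet_self _
    ((hg.comp (hS.prodMk hZ)) hA) (hci.condIndepSet_of_measurableSet htY (hY_le_I _ htY))
  exact h_not_ae_eq ⟨B, hψ_le_S _ hB, measure_symmDiff_eq_zero_iff.mpr ht_ae_eq⟩
end
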